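/- arXiv:1806.00841 — 2 statements merged into one kernel-verified Lean document; each statement's English description precedes it below -/
import Mathlib

section
/- If p is a probability vector such that the entropy h(μ_p) = −Σ_n p_n log p_n is infinite, then the pushforward Bernoulli measure satisfies dim μ_p ≤ 1/2. -/
open MeasureTheory Filter Set
open scoped ENNReal

instance : MeasurableSpace ℕ+ := ⊤

/-- The Gauss map `T x = 1/x - ⌊1/x⌋` (with `T 0 = 0`). -/
noncomputable def gaussMap (x : ℝ) : ℝ := if x = 0 then 0 else Int.fract x⁻¹

/-- Finite continued fraction approximants: `cfApprox n a` is the value of the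
continued fraction `1/(a 0 + 1/(a 1 + ⋯))` truncated after `n` levels. -/
noncomputable def cfApprox : ℕ → (ℕ → ℕ+) → ℝ
  | 0, _ => 0
  | n + 1, a => (((a 0 : ℕ) : ℝ) + cfApprox n (fun k => a (k + 1)))⁻¹

/-- The continued fraction coding map `Π : ℕ^ℕ → [0,1] ∖ ℚ`. -/
noncomputable def cfVal (a : ℕ → ℕ+) : ℝ := limUnder atTop (fun n => cfApprox n a)

/-- `p` is a countable probability vector `(p_n)_{n ≥ 1}`. -/
def IsProbVec (p : ℕ+ → ℝ) : Prop := (∀ n, 0 ≤ p n) ∧ HasSum p 1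

/-- `m` is the Bernoulli product measure on `ℕ^ℕ` with weights `p`:
it assigns to each cylinder the product of the weights of its digits. -/
def IsBernoulli (p : ℕ+ → ℝ) (m : Measure (ℕ → ℕ+)) : Prop :=
  ∀ (n : ℕ) (i : ℕ → ℕ+),
    m {a | ∀ k < n, a k = i k} = ENNReal.ofReal (∏ k ∈ Finset.range n, p (i k))

/-- Hausdorff dimension of a measure: `inf { dim_H A : μ A = 1 }`. -/
noncomputable def dimMeasure (μ : Measure ℝ) : ℝ≥0∞ :=
  ⨅ (A : Set ℝ) (_ : μ A = 1), dimH A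

/-!
By the strong law of large numbers, for every `t > 1/2` almost every digit sequence `a` satisfies
`∏_{k<n} p (a k) ≥ ∏_{k<n} (a k)^(-2t)` for all large `n`: the positive part of
`-log p_i - (t + 1/2) log i` has finite mean, whereas `log (a k)` has infinite mean because the
entropy is infinite. The rank-`n` cylinder of such a sequence has length at most
`min (∏_{k<n} (a k)^(-2)) (2 * 2^(-n))`, so the `s`-th power of its length is at most its mass
times `(2 * 2^(-n))^(s - t)`. Summing over cylinders shows that these points form a set of zero
`s`-dimensional Hausdorff measure for every `s > t`.
-/

open ProbabilityTheory Topology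

noncomputable def cfStep (i : ℕ+) (x : ℝ) : ℝ := ((i : ℝ) + x)⁻¹

/-- `cfMap n a x = 1/(a 0 + 1/(a 1 + ⋯ + 1/(a (n-1) + x)))`. -/
noncomputable def cfMap : ℕ → (ℕ → ℕ+) → ℝ → ℝ
  | 0, _, x => x
  | n + 1, a, x => cfStep (a 0) (cfMap n (fun k => a (k + 1)) x)

noncomputable def invSqProd (n : ℕ) (a : ℕ → ℕ+) : ℝ := ∏ k ∈ Finset.range n, ((a k : ℝ) ^ 2)⁻¹

section ContinuedFraction

variable {i j : ℕ+} {n : ℕ} {a b : ℕ → ℕ+} {x y : ℝ}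

lemma one_le_pnat_cast (i : ℕ+) : (1 : ℝ) ≤ i := Nat.one_le_cast.2 i.pos

lemma cfStep_mem_Icc (hx : x ∈ Icc (0 : ℝ) 1) : cfStep i x ∈ Icc (0 : ℝ) 1 := by
  have := one_le_pnat_cast i
  exact ⟨inv_nonneg.2 (by linarith [hx.1]), inv_le_one_of_one_le₀ (by linarith [hx.1])⟩

lemma cfStep_le_inv (hx : 0 ≤ x) : cfStep i x ≤ (i : ℝ)⁻¹ :=
  inv_anti₀ (by linarith [one_le_pnat_cast i]) (by linarith)

lemma abs_cfStep_sub (hx : 0 ≤ x) (hy : 0 ≤ y) :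
    |cfStep i x - cfStep i y| = cfStep i x * cfStep i y * |x - y| := by
  have := one_le_pnat_cast i
  have hx' : (i : ℝ) + x ≠ 0 := by linarith
  have hy' : (i : ℝ) + y ≠ 0 := by linarith
  rw [cfStep, cfStep, inv_sub_inv hx' hy', abs_div, abs_sub_comm, div_eq_mul_inv,
    abs_of_pos (by positivity : 0 < ((i : ℝ) + x) * ((i : ℝ) + y)), mul_inv, mul_comm,
    add_sub_add_left_eq_sub]

/-- `(i + 1/(j + x)) (j + x) = i (j + x) + 1 ≥ 2`: two inverse branches of the Gauss map compose
to a contraction by `1/4`, although a single one (`i = 1`, `x = 0`) need not contract. -/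
lemma cfStep_cfStep_mul_le (hx : 0 ≤ x) : cfStep i (cfStep j x) * cfStep j x ≤ 2⁻¹ := by
  have hi := one_le_pnat_cast i
  have hj := one_le_pnat_cast j
  have hjx : 0 < (j : ℝ) + x := by linarith
  rw [cfStep, cfStep, ← mul_inv, add_mul, inv_mul_cancel₀ hjx.ne']
  exact inv_anti₀ (by norm_num) (by nlinarith)

lemma cfMap_mem_Icc (hx : x ∈ Icc (0 : ℝ) 1) : cfMap n a x ∈ Icc (0 : ℝ) 1 := by
  induction n generalizing a with
  | zero => exact hx
  | succ n ih => exact cfStep_mem_Icc ih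

lemma cfMap_add (n m : ℕ) (a : ℕ → ℕ+) (x : ℝ) :
    cfMap (n + m) a x = cfMap n a (cfMap m (fun k => a (k + n)) x) := by
  induction n generalizing a with
  | zero => simp only [Nat.zero_add, Nat.add_zero, cfMap]
  | succ n ih =>
    rw [Nat.add_right_comm, cfMap, ih]
    simp only [cfMap, Nat.add_assoc]

lemma cfMap_congr (h : ∀ k < n, a k = b k) (x : ℝ) : cfMap n a x = cfMap n b x := by
  induction n generalizing a b with
  | zero => rfl
  | succ n ih =>
    simp only [cfMap]
    rw [h 0 n.succ_pos, ih fun k hk => h (k + 1) (by omega)]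

lemma cfApprox_eq_cfMap (n : ℕ) (a : ℕ → ℕ+) : cfApprox n a = cfMap n a 0 := by
  induction n generalizing a with
  | zero => rfl
  | succ n ih => simp only [cfApprox, cfMap, ih, cfStep]

lemma cfApprox_add (n m : ℕ) (a : ℕ → ℕ+) :
    cfApprox (n + m) a = cfMap n a (cfApprox m fun k => a (k + n)) := by
  rw [cfApprox_eq_cfMap, cfMap_add, ← cfApprox_eq_cfMap]

lemma cfApprox_mem_Icc (n : ℕ) (a : ℕ → ℕ+) : cfApprox n a ∈ Icc (0 : ℝ) 1 := by
  rw [cfApprox_eq_cfMap]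
  exact cfMap_mem_Icc (by norm_num)

lemma abs_cfMap_sub_le_invSqProd (hx : x ∈ Icc (0 : ℝ) 1) (hy : y ∈ Icc (0 : ℝ) 1) :
    |cfMap n a x - cfMap n a y| ≤ invSqProd n a * |x - y| := by
  induction n generalizing a with
  | zero => simp [cfMap, invSqProd]
  | succ n ih =>
    set u := cfMap n (fun k => a (k + 1)) x
    set v := cfMap n (fun k => a (k + 1)) y
    have hu : u ∈ Icc (0 : ℝ) 1 := cfMap_mem_Icc hx
    have hv : v ∈ Icc (0 : ℝ) 1 := cfMap_mem_Icc hy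
    have hstep : cfStep (a 0) u * cfStep (a 0) v ≤ ((a 0 : ℝ) ^ 2)⁻¹ := by
      rw [← inv_pow, sq]
      exact mul_le_mul (cfStep_le_inv hu.1) (cfStep_le_inv hv.1)
        (cfStep_mem_Icc hv).1 (inv_nonneg.2 (by positivity))
    calc |cfMap (n + 1) a x - cfMap (n + 1) a y|
        = cfStep (a 0) u * cfStep (a 0) v * |u - v| := abs_cfStep_sub hu.1 hv.1
      _ ≤ ((a 0 : ℝ) ^ 2)⁻¹ * (invSqProd n (fun k => a (k + 1)) * |x - y|) :=
          mul_le_mul hstep ih (abs_nonneg _) (by positivity)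
      _ = invSqProd (n + 1) a * |x - y| := by
          simp only [invSqProd, Finset.prod_range_succ']
          ring

lemma abs_cfMap_sub_le_geometric (hx : x ∈ Icc (0 : ℝ) 1) (hy : y ∈ Icc (0 : ℝ) 1) :
    |cfMap n a x - cfMap n a y| ≤ 2 * 2⁻¹ ^ n * |x - y| := by
  induction n using Nat.twoStepInduction generalizing a with
  | zero => simp only [cfMap, pow_zero]; linarith [abs_nonneg (x - y)]
  | one =>
    have h := abs_cfMap_sub_le_invSqProd (n := 1) (a := a) hx hy
    have : invSqProd 1 a ≤ 1 := by
      simpa [invSqProd] using inv_le_one_of_one_le₀ (one_le_pow₀ (one_le_pnat_cast (a 0)))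
    nlinarith [abs_nonneg (x - y)]
  | more n ih _ =>
    set u := cfMap n (fun k => a (k + 2)) x
    set v := cfMap n (fun k => a (k + 2)) y
    have hu : u ∈ Icc (0 : ℝ) 1 := cfMap_mem_Icc hx
    have hv : v ∈ Icc (0 : ℝ) 1 := cfMap_mem_Icc hy
    have hu' := cfStep_mem_Icc (i := a 1) hu
    have hv' := cfStep_mem_Icc (i := a 1) hv
    have hcontr : cfStep (a 0) (cfStep (a 1) u) * cfStep (a 0) (cfStep (a 1) v) *
        (cfStep (a 1) u * cfStep (a 1) v) ≤ 4⁻¹ := by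
      have h1 := cfStep_cfStep_mul_le (i := a 0) (j := a 1) hu.1
      have h2 := cfStep_cfStep_mul_le (i := a 0) (j := a 1) hv.1
      have := (cfStep_mem_Icc (i := a 0) hu').1
      have := (cfStep_mem_Icc (i := a 0) hv').1
      nlinarith [mul_le_mul h1 h2 (mul_nonneg this hv'.1) (by norm_num)]
    calc |cfMap (n + 2) a x - cfMap (n + 2) a y|
        = cfStep (a 0) (cfStep (a 1) u) * cfStep (a 0) (cfStep (a 1) v) *
            (cfStep (a 1) u * cfStep (a 1) v * |u - v|) := by
          rw [← abs_cfStep_sub hu.1 hv.1, ← abs_cfStep_sub hu'.1 hv'.1]; rfl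
      _ ≤ 4⁻¹ * (2 * 2⁻¹ ^ n * |x - y|) := by
          rw [← mul_assoc]
          exact mul_le_mul hcontr ih (abs_nonneg _) (by norm_num)
      _ = 2 * 2⁻¹ ^ (n + 2) * |x - y| := by ring

lemma abs_cfMap_sub_le (hx : x ∈ Icc (0 : ℝ) 1) (hy : y ∈ Icc (0 : ℝ) 1) :
    |cfMap n a x - cfMap n a y| ≤ min (invSqProd n a) (2 * 2⁻¹ ^ n) := by
  have hxy : |x - y| ≤ 1 := abs_sub_le_iff.2 ⟨by linarith [hx.2, hy.1], by linarith [hx.1, hy.2]⟩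
  have hP : 0 ≤ invSqProd n a := Finset.prod_nonneg fun _ _ => by positivity
  exact le_min
    ((abs_cfMap_sub_le_invSqProd hx hy).trans (mul_le_of_le_one_right hP hxy))
    ((abs_cfMap_sub_le_geometric hx hy).trans (mul_le_of_le_one_right (by positivity) hxy))

lemma tendsto_cfApprox (a : ℕ → ℕ+) : Tendsto (fun n => cfApprox n a) atTop (𝓝 (cfVal a)) := by
  have hcauchy : CauchySeq fun n => cfApprox n a :=
    cauchySeq_of_le_geometric 2⁻¹ 2 (by norm_num) fun n => by
      rw [Real.dist_eq, cfApprox_add n 1, cfApprox_eq_cfMap n]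
      exact (abs_cfMap_sub_le (by norm_num) (cfApprox_mem_Icc _ _)).trans (min_le_right _ _)
  obtain ⟨x, hx⟩ := cauchySeq_tendsto_of_complete hcauchy
  rwa [cfVal, hx.limUnder_eq]

lemma measurable_cfApprox (n : ℕ) : Measurable (cfApprox n) := by
  induction n with
  | zero => exact measurable_const
  | succ n ih =>
    have hdigit : Measurable fun a : ℕ → ℕ+ => ((a 0 : ℕ) : ℝ) :=
      (measurable_from_top (f := fun i : ℕ+ => ((i : ℕ) : ℝ))).comp (measurable_pi_apply 0)
    exact (hdigit.add (ih.comp (measurable_pi_lambda _ fun k => measurable_pi_apply (k + 1)))).inv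

lemma measurable_cfVal : Measurable cfVal :=
  measurable_of_tendsto_metrizable measurable_cfApprox (tendsto_pi_nhds.2 tendsto_cfApprox)

lemma abs_cfVal_sub_le {n : ℕ} {a b c : ℕ → ℕ+} (ha : ∀ k < n, a k = c k)
    (hb : ∀ k < n, b k = c k) : |cfVal a - cfVal b| ≤ min (invSqProd n c) (2 * 2⁻¹ ^ n) := by
  have hshift (d : ℕ → ℕ+) : Tendsto (fun m => cfApprox (n + m) d) atTop (𝓝 (cfVal d)) :=
    (tendsto_cfApprox d).comp ((tendsto_add_atTop_nat n).congr fun m => Nat.add_comm m n)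
  refine le_of_tendsto ((hshift a).sub (hshift b)).abs (Eventually.of_forall fun m => ?_)
  rw [cfApprox_add, cfApprox_add, cfMap_congr ha, cfMap_congr hb]
  exact abs_cfMap_sub_le (cfApprox_mem_Icc _ _) (cfApprox_mem_Icc _ _)

end ContinuedFraction

section ProductMeasure

variable {β : Type*} [MeasurableSpace β] [MeasurableSingletonClass β]

/-- The marginals on `Finset.range n` live on a countable space, whose singletons pull back to
initial cylinders; every other finite-dimensional marginal is an image of one of these. -/
theorem ext_of_forall_measure_initial_cylinder [Countable β] {μ ν : Measure (ℕ → β)}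
    [IsFiniteMeasure μ]
    (h : ∀ (n : ℕ) (b : ℕ → β), μ {a | ∀ k < n, a k = b k} = ν {a | ∀ k < n, a k = b k}) :
    μ = ν := by
  have hrange (n : ℕ) : ν.map (Finset.range n).restrict = μ.map (Finset.range n).restrict := by
    refine Measure.ext_of_singleton fun w => ?_
    rw [Measure.map_apply (by fun_prop) (measurableSet_singleton w),
      Measure.map_apply (by fun_prop) (measurableSet_singleton w)]
    rcases ((Finset.range n).restrict (π := fun _ => β) ⁻¹' {w}).eq_empty_or_nonempty with
      hw | ⟨b, rfl⟩
    · rw [hw, measure_empty, measure_empty]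
    · have hcyl : (Finset.range n).restrict (π := fun _ => β) ⁻¹' {(Finset.range n).restrict b}
          = {a : ℕ → β | ∀ k < n, a k = b k} := by
        ext a
        simp [funext_iff, Finset.restrict]
      rw [hcyl, h]
  refine IsProjectiveLimit.unique (P := fun I => μ.map I.restrict) (fun _ => rfl) fun I => ?_
  obtain ⟨n, hI⟩ := I.exists_nat_subset_range
  show ν.map I.restrict = μ.map I.restrict
  have hmeas := Finset.measurable_restrict (X := fun _ : ℕ => β) (Finset.range n)
  have hmeas₂ := Finset.measurable_restrict₂ (X := fun _ : ℕ => β) hI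
  rw [← Finset.restrict₂_comp_restrict hI, ← Measure.map_map hmeas₂ hmeas,
    ← Measure.map_map hmeas₂ hmeas, hrange]

lemma infinitePi_initial_cylinder (μ : Measure β) [IsProbabilityMeasure μ] (n : ℕ) (b : ℕ → β) :
    Measure.infinitePi (fun _ => μ) {a | ∀ k < n, a k = b k} = ∏ k ∈ Finset.range n, μ {b k} := by
  have hcyl : {a : ℕ → β | ∀ k < n, a k = b k} = Set.pi (Finset.range n) fun k => {b k} := by
    ext a
    simp
  rw [hcyl, Measure.infinitePi_pi _ fun k _ => measurableSet_singleton (b k)]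

end ProductMeasure

section Bernoulli

variable {p : ℕ+ → ℝ} {m : Measure (ℕ → ℕ+)}

noncomputable def IsProbVec.toPMF (hp : IsProbVec p) : PMF ℕ+ :=
  ⟨fun i => ENNReal.ofReal (p i), ENNReal.summable.hasSum_iff.2 <| by
    rw [← ENNReal.ofReal_tsum_of_nonneg hp.1 hp.2.summable, hp.2.tsum_eq, ENNReal.ofReal_one]⟩

lemma IsProbVec.toMeasure_singleton (hp : IsProbVec p) (i : ℕ+) :
    hp.toPMF.toMeasure {i} = ENNReal.ofReal (p i) :=
  hp.toPMF.toMeasure_apply_singleton i (measurableSet_singleton i)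

lemma IsProbVec.integrable_toMeasure_iff (hp : IsProbVec p) {F : ℕ+ → ℝ} :
    Integrable F hp.toPMF.toMeasure ↔ Summable fun i => p i * |F i| := by
  rw [← Measure.sum_smul_dirac hp.toPMF.toMeasure, integrable_sum_dirac_iff fun i => by
    simp [hp.toMeasure_singleton]]
  simp only [hp.toMeasure_singleton, ENNReal.toReal_ofReal (hp.1 _), Real.norm_eq_abs]

lemma IsProbVec.ae_toMeasure_pos (hp : IsProbVec p) : ∀ᵐ i ∂hp.toPMF.toMeasure, 0 < p i := by
  rw [ae_iff, PMF.toMeasure_apply_eq_zero_iff _ (.of_discrete)]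
  exact Set.disjoint_left.2 fun i hi hneg =>
    hneg (ENNReal.ofReal_pos.1 (pos_iff_ne_zero.2 ((PMF.mem_support_iff _ i).1 hi)))

theorem IsBernoulli.eq_infinitePi (hp : IsProbVec p) (hb : IsBernoulli p m) :
    m = Measure.infinitePi fun _ => hp.toPMF.toMeasure := by
  refine (ext_of_forall_measure_initial_cylinder fun n b => ?_).symm
  rw [infinitePi_initial_cylinder, hb n b, ENNReal.ofReal_prod_of_nonneg fun k _ => hp.1 (b k)]
  simp only [hp.toMeasure_singleton]

end Bernoulli

section StrongLaw

variable {α : Type*} [MeasurableSpace α] {μ : Measure α} [IsProbabilityMeasure μ] {F : α → ℝ}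

theorem ae_tendsto_average_infinitePi (hFm : Measurable F) (hF : Integrable F μ) :
    ∀ᵐ a ∂Measure.infinitePi (fun _ : ℕ => μ),
      Tendsto (fun n : ℕ => (∑ k ∈ Finset.range n, F (a k)) / n) atTop (𝓝 (∫ x, F x ∂μ)) := by
  have hlaw (k : ℕ) : (Measure.infinitePi fun _ : ℕ => μ).map (fun a => F (a k)) = μ.map F :=
    (Measure.map_map hFm (measurable_pi_apply k)).symm.trans
      (by rw [Measure.infinitePi_map_eval])
  have hident (k : ℕ) : IdentDistrib (fun a : ℕ → α => F (a k)) (fun a => F (a 0))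
      (Measure.infinitePi fun _ => μ) (Measure.infinitePi fun _ => μ) :=
    ⟨(hFm.comp (measurable_pi_apply k)).aemeasurable,
      (hFm.comp (measurable_pi_apply 0)).aemeasurable, by rw [hlaw, hlaw]⟩
  have hmean : ∫ a, F (a 0) ∂Measure.infinitePi (fun _ : ℕ => μ) = ∫ x, F x ∂μ :=
    (integral_map (measurable_pi_apply 0).aemeasurable hFm.aestronglyMeasurable).symm.trans
      (by rw [Measure.infinitePi_map_eval])
  have hindep := iIndepFun_infinitePi (P := fun _ : ℕ => μ) (X := fun _ => F) fun _ => hFm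
  simpa only [hmean] using strong_law_ae_real (fun k (a : ℕ → α) => F (a k))
    ((measurePreserving_eval_infinitePi _ 0).integrable_comp_of_integrable hF)
    (fun _ _ hij => hindep.indepFun hij) hident

lemma integrable_min_natCast (hFm : Measurable F) (hF0 : 0 ≤ F) (M : ℕ) :
    Integrable (fun x => min (F x) M) μ :=
  (integrable_const (M : ℝ)).mono' (by fun_prop) (ae_of_all _ fun x => by
    rw [Real.norm_of_nonneg (le_min (hF0 x) M.cast_nonneg)]
    exact min_le_right _ _)

lemma exists_lt_integral_min_of_not_integrable (hFm : Measurable F) (hF0 : 0 ≤ F)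
    (hF : ¬ Integrable F μ) (K : ℝ) : ∃ M : ℕ, K < ∫ x, min (F x) M ∂μ := by
  have htop : ∫⁻ x, ENNReal.ofReal (F x) ∂μ = ∞ := by
    by_contra h
    exact hF ⟨hFm.aestronglyMeasurable,
      (hasFiniteIntegral_iff_ofReal (ae_of_all _ hF0)).2 (lt_top_iff_ne_top.2 h)⟩
  have hmono : Tendsto (fun M : ℕ => ∫⁻ x, ENNReal.ofReal (min (F x) M) ∂μ) atTop
      (𝓝 (∫⁻ x, ENNReal.ofReal (F x) ∂μ)) :=
    lintegral_tendsto_of_tendsto_of_monotone (fun _ => by fun_prop)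
      (ae_of_all _ fun x M N hMN => ENNReal.ofReal_le_ofReal
        (min_le_min_left _ (Nat.cast_le.2 hMN)))
      (ae_of_all _ fun x => tendsto_const_nhds.congr' <|
        (eventually_ge_atTop ⌈F x⌉₊).mono fun M hM => by
          dsimp only
          rw [min_eq_left ((Nat.le_ceil _).trans (Nat.cast_le.2 hM))])
  obtain ⟨M, hM⟩ := (hmono.eventually (lt_mem_nhds (htop ▸ ENNReal.ofReal_lt_top))).exists
  refine ⟨M, ?_⟩
  rw [← ofReal_integral_eq_lintegral_ofReal (integrable_min_natCast hFm hF0 M)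
    (ae_of_all _ fun x => le_min (hF0 x) M.cast_nonneg)] at hM
  exact (ENNReal.ofReal_lt_ofReal_iff'.1 hM).1

theorem ae_tendsto_average_atTop_infinitePi (hFm : Measurable F) (hF0 : 0 ≤ F)
    (hF : ¬ Integrable F μ) :
    ∀ᵐ a ∂Measure.infinitePi (fun _ : ℕ => μ),
      Tendsto (fun n : ℕ => (∑ k ∈ Finset.range n, F (a k)) / n) atTop atTop := by
  have htrunc := ae_all_iff.2 fun M : ℕ =>
    ae_tendsto_average_infinitePi (μ := μ) (by fun_prop) (integrable_min_natCast hFm hF0 M)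
  filter_upwards [htrunc] with a ha
  refine tendsto_atTop.2 fun K => ?_
  obtain ⟨M, hM⟩ := exists_lt_integral_min_of_not_integrable hFm hF0 hF K
  filter_upwards [(ha M).eventually (le_mem_nhds hM)] with n hn
  exact hn.trans (div_le_div_of_nonneg_right
    (Finset.sum_le_sum fun k _ => min_le_left _ _) n.cast_nonneg)

end StrongLaw

section Entropy

variable {p : ℕ+ → ℝ}

lemma neg_mul_log_le_sub_mul_log {x q : ℝ} (hx : 0 ≤ x) (hq : 0 < q) :
    -(x * Real.log x) ≤ q - x * Real.log q := by
  rcases hx.eq_or_lt with rfl | hx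
  · simpa using hq.le
  have := Real.log_le_sub_one_of_pos (div_pos hq hx)
  rw [Real.log_div hq.ne' hx.ne'] at this
  have h1 := mul_le_mul_of_nonneg_left this hx.le
  have h2 : x * (q / x - 1) = q - x := by field_simp
  linarith

lemma summable_mul_max_neg_log_sub (hp0 : ∀ i, 0 ≤ p i) {r : ℝ} (hr : 1 < r) :
    Summable fun i : ℕ+ => p i * max (-Real.log (p i) - r * Real.log i) 0 := by
  refine ((Real.summable_nat_rpow_inv.2 hr).comp_injective PNat.coe_injective).of_nonneg_of_le
    (fun i => mul_nonneg (hp0 i) (le_max_right _ _)) fun i => ?_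
  have hi : (0 : ℝ) < i := by linarith [one_le_pnat_cast i]
  have key := neg_mul_log_le_sub_mul_log (hp0 i) (inv_pos.2 (Real.rpow_pos_of_pos hi r))
  rw [Real.log_inv, Real.log_rpow hi] at key
  rw [mul_max_of_nonneg _ _ (hp0 i), mul_zero, Function.comp_apply]
  exact max_le (by linarith) (by positivity)

lemma not_summable_mul_log_coe (hp : IsProbVec p)
    (hent : ¬ Summable fun i : ℕ+ => p i * Real.log (p i)) :
    ¬ Summable fun i : ℕ+ => p i * Real.log i := by
  intro hlog
  refine hent (summable_neg_iff.1 ?_)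
  refine ((summable_mul_max_neg_log_sub hp.1 one_lt_two).add (hlog.mul_left 2)).of_nonneg_of_le
    (fun i => ?_) fun i => ?_
  · have := Real.log_nonpos (hp.1 i) (le_hasSum hp.2 i fun j _ => hp.1 j)
    exact neg_nonneg.2 (mul_nonpos_of_nonneg_of_nonpos (hp.1 i) this)
  · have := mul_le_mul_of_nonneg_left
      (le_max_left (-Real.log (p i) - 2 * Real.log i) 0) (hp.1 i)
    linarith

lemma invSqProd_rpow_le_prod {n : ℕ} {a : ℕ → ℕ+} {t : ℝ} (hpos : ∀ k, 0 < p (a k))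
    (h : ∑ k ∈ Finset.range n, -Real.log (p (a k)) ≤
      2 * t * ∑ k ∈ Finset.range n, Real.log (a k)) :
    invSqProd n a ^ t ≤ ∏ k ∈ Finset.range n, p (a k) := by
  have hdigit (k : ℕ) : (0 : ℝ) < a k := by linarith [one_le_pnat_cast (a k)]
  have hP : 0 < invSqProd n a := Finset.prod_pos fun k _ => by have := hdigit k; positivity
  rw [← Real.log_le_log_iff (by positivity) (Finset.prod_pos fun k _ => hpos k),
    Real.log_rpow hP, invSqProd, Real.log_prod fun k _ => by have := hdigit k; positivity,
    Real.log_prod fun k _ => (hpos k).ne']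
  simp only [Real.log_inv, Real.log_pow, Finset.sum_neg_distrib, ← Finset.mul_sum] at h ⊢
  push_cast
  linarith

theorem IsProbVec.ae_eventually_invSqProd_rpow_le (hp : IsProbVec p)
    (hent : ¬ Summable fun i : ℕ+ => p i * Real.log (p i)) {t : ℝ} (ht : 1 / 2 < t) :
    ∀ᵐ a ∂Measure.infinitePi (fun _ : ℕ => hp.toPMF.toMeasure),
      ∀ᶠ n in atTop, invSqProd n a ^ t ≤ ∏ k ∈ Finset.range n, p (a k) := by
  set X : ℕ+ → ℝ := fun i => max (-Real.log (p i) - (t + 1 / 2) * Real.log i) 0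
  have hX : Integrable X hp.toPMF.toMeasure := hp.integrable_toMeasure_iff.2 <|
    (summable_mul_max_neg_log_sub hp.1 (r := t + 1 / 2) (by linarith)).congr fun i => by
      rw [abs_of_nonneg (le_max_right _ _)]
  have hlog_nonneg : 0 ≤ fun i : ℕ+ => Real.log i := fun i => Real.log_nonneg (one_le_pnat_cast i)
  have hlog : ¬ Integrable (fun i : ℕ+ => Real.log i) hp.toPMF.toMeasure := by
    rw [hp.integrable_toMeasure_iff]
    exact fun h => not_summable_mul_log_coe hp hent <|
      h.congr fun i => by rw [abs_of_nonneg (hlog_nonneg i)]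
  have hpos : ∀ᵐ a ∂Measure.infinitePi (fun _ : ℕ => hp.toPMF.toMeasure), ∀ k, 0 < p (a k) :=
    ae_all_iff.2 fun k =>
      (measurePreserving_eval_infinitePi (fun _ : ℕ => hp.toPMF.toMeasure) k
        ).quasiMeasurePreserving.ae (p := fun i => 0 < p i) hp.ae_toMeasure_pos
  filter_upwards [ae_tendsto_average_infinitePi .of_discrete hX,
    ae_tendsto_average_atTop_infinitePi .of_discrete hlog_nonneg hlog, hpos] with a hXa hLa hpa
  set C := ∫ i, X i ∂hp.toPMF.toMeasure
  have hδ : 0 < t - 1 / 2 := by linarith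
  filter_upwards [hXa.eventually (gt_mem_nhds (lt_add_one C)),
    hLa.eventually_ge_atTop ((C + 1) / (t - 1 / 2)), eventually_gt_atTop 0] with n hXn hLn hn
  have hn' : (0 : ℝ) < n := Nat.cast_pos.2 hn
  rw [div_lt_iff₀ hn'] at hXn
  rw [div_le_div_iff₀ hδ hn'] at hLn
  have hpoint : ∑ k ∈ Finset.range n, -Real.log (p (a k)) ≤
      (t + 1 / 2) * ∑ k ∈ Finset.range n, Real.log (a k) + ∑ k ∈ Finset.range n, X (a k) := by
    rw [Finset.mul_sum, ← Finset.sum_add_distrib]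
    exact Finset.sum_le_sum fun k _ => by
      linarith [le_max_left (-Real.log (p (a k)) - (t + 1 / 2) * Real.log (a k)) 0]
  exact invSqProd_rpow_le_prod hpa (by linarith)

end Entropy

section Covering

variable {p : ℕ+ → ℝ}

def initialWord (n : ℕ) (a : ℕ → ℕ+) (k : Fin n) : ℕ+ := a k

def goodSet (p : ℕ+ → ℝ) (t : ℝ) (N : ℕ) : Set (ℕ → ℕ+) :=
  {a | ∀ n ≥ N, invSqProd n a ^ t ≤ ∏ k ∈ Finset.range n, p (a k)}

lemma initialWord_eq_iff {n : ℕ} {a c : ℕ → ℕ+} :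
    initialWord n a = initialWord n c ↔ ∀ k < n, a k = c k := by
  simp [initialWord, funext_iff, Fin.forall_iff]

lemma measurable_initialWord (n : ℕ) : Measurable (initialWord n) :=
  measurable_pi_lambda _ fun k => measurable_pi_apply (k : ℕ)

lemma min_rpow_le_rpow_mul_rpow {x y t s : ℝ} (hx : 0 ≤ x) (hy : 0 ≤ y) (ht : 0 ≤ t)
    (hts : t < s) : min x y ^ s ≤ x ^ t * y ^ (s - t) := by
  have hmin : 0 ≤ min x y := le_min hx hy
  calc min x y ^ s = min x y ^ t * min x y ^ (s - t) := by
        rw [← Real.rpow_add' hmin (by linarith), add_sub_cancel]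
    _ ≤ x ^ t * y ^ (s - t) :=
        mul_le_mul (Real.rpow_le_rpow hmin (min_le_left x y) ht)
          (Real.rpow_le_rpow hmin (min_le_right x y) (by linarith)) (by positivity) (by positivity)

lemma ediam_image_cylinder_le (n : ℕ) (c : ℕ → ℕ+) {S : Set (ℕ → ℕ+)} :
    Metric.ediam (cfVal '' (S ∩ initialWord n ⁻¹' {initialWord n c})) ≤
      ENNReal.ofReal (min (invSqProd n c) (2 * 2⁻¹ ^ n)) := by
  refine Metric.ediam_le ?_
  rintro _ ⟨a, ⟨-, ha⟩, rfl⟩ _ ⟨b, ⟨-, hb⟩, rfl⟩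
  rw [edist_dist, Real.dist_eq]
  exact ENNReal.ofReal_le_ofReal (abs_cfVal_sub_le (initialWord_eq_iff.1 ha)
    (initialWord_eq_iff.1 hb))

lemma ediam_image_goodSet_inter_cylinder_rpow_le (hp : IsProbVec p) {t s : ℝ} (ht : 0 ≤ t)
    (hts : t < s) {N n : ℕ} (hn : N ≤ n) (w : Fin n → ℕ+) :
    Metric.ediam (cfVal '' (goodSet p t N ∩ initialWord n ⁻¹' {w})) ^ s ≤
      Measure.infinitePi (fun _ : ℕ => hp.toPMF.toMeasure) (initialWord n ⁻¹' {w}) *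
        ENNReal.ofReal ((2 * 2⁻¹ ^ n) ^ (s - t)) := by
  rcases (goodSet p t N ∩ initialWord n ⁻¹' {w}).eq_empty_or_nonempty with
    hempty | ⟨c, hc, rfl⟩
  · rw [hempty, image_empty, Metric.ediam_empty, ENNReal.zero_rpow_of_pos (by linarith)]
    exact zero_le
  have hcyl : initialWord n ⁻¹' {initialWord n c} = {a | ∀ k < n, a k = c k} :=
    Set.ext fun _ => initialWord_eq_iff
  have hP : 0 ≤ invSqProd n c := Finset.prod_nonneg fun _ _ => by positivity
  have hmass : Measure.infinitePi (fun _ : ℕ => hp.toPMF.toMeasure)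
      (initialWord n ⁻¹' {initialWord n c}) = ENNReal.ofReal (∏ k ∈ Finset.range n, p (c k)) := by
    simp only [hcyl, infinitePi_initial_cylinder, hp.toMeasure_singleton,
      ENNReal.ofReal_prod_of_nonneg fun k _ => hp.1 (c k)]
  rw [hmass, ← ENNReal.ofReal_mul (Finset.prod_nonneg fun k _ => hp.1 (c k))]
  calc Metric.ediam (cfVal '' (goodSet p t N ∩ initialWord n ⁻¹' {initialWord n c})) ^ s
      ≤ ENNReal.ofReal (min (invSqProd n c) (2 * 2⁻¹ ^ n)) ^ s :=
        ENNReal.rpow_le_rpow (ediam_image_cylinder_le n c) (by linarith)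
    _ = ENNReal.ofReal (min (invSqProd n c) (2 * 2⁻¹ ^ n) ^ s) :=
        ENNReal.ofReal_rpow_of_nonneg (le_min hP (by positivity)) (by linarith)
    _ ≤ ENNReal.ofReal ((∏ k ∈ Finset.range n, p (c k)) * (2 * 2⁻¹ ^ n) ^ (s - t)) :=
        ENNReal.ofReal_le_ofReal <| (min_rpow_le_rpow_mul_rpow hP (by positivity) ht hts).trans
          (mul_le_mul_of_nonneg_right (hc n hn) (by positivity))

lemma tsum_ediam_image_goodSet_inter_cylinder_rpow_le (hp : IsProbVec p) {t s : ℝ} (ht : 0 ≤ t)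
    (hts : t < s) {N n : ℕ} (hn : N ≤ n) :
    ∑' w : Fin n → ℕ+, Metric.ediam (cfVal '' (goodSet p t N ∩ initialWord n ⁻¹' {w})) ^ s ≤
      ENNReal.ofReal ((2 * 2⁻¹ ^ n) ^ (s - t)) := by
  have hmass : ∑' w : Fin n → ℕ+,
      Measure.infinitePi (fun _ : ℕ => hp.toPMF.toMeasure) (initialWord n ⁻¹' {w}) = 1 := by
    rw [← tsum_univ, tsum_measure_preimage_singleton (f := initialWord n) countable_univ
      fun w _ => measurable_initialWord n (measurableSet_singleton w), preimage_univ, measure_univ]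
  calc _ ≤ ∑' w : Fin n → ℕ+,
        Measure.infinitePi (fun _ : ℕ => hp.toPMF.toMeasure) (initialWord n ⁻¹' {w}) *
          ENNReal.ofReal ((2 * 2⁻¹ ^ n) ^ (s - t)) :=
        ENNReal.tsum_le_tsum fun w => ediam_image_goodSet_inter_cylinder_rpow_le hp ht hts hn w
    _ = ENNReal.ofReal ((2 * 2⁻¹ ^ n) ^ (s - t)) := by rw [ENNReal.tsum_mul_right, hmass, one_mul]

theorem dimH_image_goodSet_le (hp : IsProbVec p) {t s : ℝ} (ht : 0 ≤ t) (hts : t < s) (N : ℕ) :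
    dimH (cfVal '' goodSet p t N) ≤ ENNReal.ofReal s := by
  have hgeom : Tendsto (fun n : ℕ => 2 * (2 : ℝ)⁻¹ ^ n) atTop (𝓝 0) := by
    simpa using (tendsto_pow_atTop_nhds_zero_of_lt_one (by norm_num) (by norm_num :
      (2 : ℝ)⁻¹ < 1)).const_mul 2
  have hbound : Tendsto (fun n : ℕ => ENNReal.ofReal ((2 * 2⁻¹ ^ n) ^ (s - t))) atTop (𝓝 0) := by
    simpa [Real.zero_rpow (sub_pos.2 hts).ne'] using
      ENNReal.tendsto_ofReal (hgeom.rpow_const (Or.inr (sub_pos.2 hts).le))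
  have hdiam : ∀ n (w : Fin n → ℕ+),
      Metric.ediam (cfVal '' (goodSet p t N ∩ initialWord n ⁻¹' {w})) ≤
        ENNReal.ofReal (2 * 2⁻¹ ^ n) := by
    intro n w
    rcases (initialWord n ⁻¹' {w}).eq_empty_or_nonempty with hempty | ⟨c, rfl⟩
    · simp [hempty]
    · exact (ediam_image_cylinder_le n c).trans (ENNReal.ofReal_le_ofReal (min_le_right _ _))
  have hcover : ∀ n, cfVal '' goodSet p t N ⊆
      ⋃ w : Fin n → ℕ+, cfVal '' (goodSet p t N ∩ initialWord n ⁻¹' {w}) := by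
    rintro n _ ⟨a, ha, rfl⟩
    exact mem_iUnion.2 ⟨initialWord n a, a, ⟨ha, rfl⟩, rfl⟩
  have hnull : μH[s] (cfVal '' goodSet p t N) = 0 := by
    refine le_antisymm ?_ bot_le
    calc μH[s] (cfVal '' goodSet p t N)
        ≤ liminf (fun n => ∑' w : Fin n → ℕ+,
            Metric.ediam (cfVal '' (goodSet p t N ∩ initialWord n ⁻¹' {w})) ^ s) atTop :=
          Measure.hausdorffMeasure_le_liminf_tsum s _ _
            (by simpa using ENNReal.tendsto_ofReal hgeom) _ (Eventually.of_forall hdiam)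
            (Eventually.of_forall hcover)
      _ ≤ liminf (fun n : ℕ => ENNReal.ofReal ((2 * 2⁻¹ ^ n) ^ (s - t))) atTop :=
          liminf_le_liminf (eventually_atTop.2 ⟨N, fun n hn =>
            tsum_ediam_image_goodSet_inter_cylinder_rpow_le hp ht hts hn⟩)
      _ = 0 := hbound.liminf_eq
  have hs : (s.toNNReal : ℝ) = s := Real.coe_toNNReal s (by linarith)
  exact dimH_le_of_hausdorffMeasure_ne_top (d := s.toNNReal)
    (by rw [hs, hnull]; exact ENNReal.zero_ne_top)

end Covering

lemma dimMeasure_map_le_dimH {Ω : Type*} [MeasurableSpace Ω] {μ : Measure Ω}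
    [IsProbabilityMeasure μ] {f : Ω → ℝ} (hf : AEMeasurable f μ) {A : Set ℝ}
    (hA : ∀ᵐ x ∂μ, f x ∈ A) : dimMeasure (μ.map f) ≤ dimH A := by
  have : IsProbabilityMeasure (μ.map f) := Measure.isProbabilityMeasure_map hf
  have hpre : μ (f ⁻¹' A) = 1 :=
    (measure_congr (ae_eq_univ.2 (mem_ae_iff.1 hA))).trans measure_univ
  have hA1 : μ.map f A = 1 := le_antisymm prob_le_one (hpre ▸ Measure.le_map_apply hf A)
  exact iInf₂_le A hA1

theorem dim_le_half_of_infinite_entropy_general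
    (p : ℕ+ → ℝ) (m : Measure (ℕ → ℕ+))
    (hp : IsProbVec p) (hb : IsBernoulli p m)
    (hent : ¬ Summable (fun n : ℕ+ => p n * Real.log (p n))) :
    dimMeasure (m.map cfVal) ≤ 1 / 2 := by
  obtain rfl := hb.eq_infinitePi hp
  refine ENNReal.le_of_forall_pos_le_add fun ε hε _ => ?_
  have hε' : (0 : ℝ) < ε := hε
  have hgood := hp.ae_eventually_invSqProd_rpow_le hent (t := 1 / 2 + ε / 2) (by linarith)
  calc dimMeasure (Measure.map cfVal _)
      ≤ dimH (⋃ N, cfVal '' goodSet p (1 / 2 + ε / 2) N) :=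
        dimMeasure_map_le_dimH measurable_cfVal.aemeasurable <| hgood.mono fun a ha => by
          obtain ⟨N, hN⟩ := eventually_atTop.1 ha
          exact mem_iUnion.2 ⟨N, a, hN, rfl⟩
    _ ≤ ENNReal.ofReal (1 / 2 + ε) := by
        rw [dimH_iUnion]
        exact iSup_le fun N => dimH_image_goodSet_le hp (by positivity) (by linarith) N
    _ = 1 / 2 + ε := by
        rw [ENNReal.ofReal_add (by norm_num) ε.coe_nonneg, ENNReal.ofReal_coe_nnreal, one_div,
          ENNReal.ofReal_inv_of_pos two_pos, ENNReal.ofReal_ofNat, one_div]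

/-- If the entropy `h(μ_p) = -∑ p_n log p_n` is infinite (equivalently, the series
`∑ p_n log p_n` is not summable), then `dim μ_p ≤ 1/2`. -/
theorem dim_le_half_of_infinite_entropy
    (p : ℕ+ → ℝ) (m : Measure (ℕ → ℕ+))
    (hp : IsProbVec p) (hm : IsProbabilityMeasure m) (hb : IsBernoulli p m)
    (hent : ¬ Summable (fun n : ℕ+ => p n * Real.log (p n))) :
    dimMeasure (m.map cfVal) ≤ 1 / 2 :=
  dim_le_half_of_infinite_entropy_general p m hp hb hent
end

section
/- Set c = (1/8)·|log( (T′(z_1)·T′(z_2)) / (T′(z_{12})·T′(z_{21})) )|. Then for every real b ≥ 3/4 and all p_1, p_2 ∈ (0,1]: if |b·log|T′(z_1)| + log p_1| < c and |b·log|T′(z_2)| + log p_2| < c, then (1/2)·|b·log(|T′(z_{12})|·|T′(z_{21})|) + log(p_1 p_2)| ≥ 2c. -/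
/-- `z₁ = (√5-1)/2`, the fixed point of the Gauss map with expansion `(1,1,1,…)`. -/
noncomputable def z1 : ℝ := (Real.sqrt 5 - 1) / 2

/-- `z₂ = √2-1`, the fixed point with expansion `(2,2,2,…)`. -/
noncomputable def z2 : ℝ := Real.sqrt 2 - 1

/-- `z₁₂ = √3-1`, the period-2 point with expansion `(1,2,1,2,…)`. -/
noncomputable def z12 : ℝ := Real.sqrt 3 - 1

/-- `z₂₁ = (√3-1)/2`, the period-2 point with expansion `(2,1,2,1,…)`. -/
noncomputable def z21 : ℝ := (Real.sqrt 3 - 1) / 2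

/-- `log |T'(z)| = log (z⁻²)` for the Gauss map. -/
noncomputable def logAbsDerivAt (z : ℝ) : ℝ := Real.log (z⁻¹ ^ 2)

/-- `c = (1/8) |log ( (T'(z₁) T'(z₂)) / (T'(z₁₂) T'(z₂₁)) )`. -/
noncomputable def cConst : ℝ :=
  (1 / 8) * |Real.log ((z1⁻¹ ^ 2 * z2⁻¹ ^ 2) / (z12⁻¹ ^ 2 * z21⁻¹ ^ 2))|

lemma z1_pos : 0 < z1 := by
  have : (1:ℝ) < Real.sqrt 5 := by
    rw [show (1:ℝ) = Real.sqrt 1 by simp]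
    exact Real.sqrt_lt_sqrt (by norm_num) (by norm_num)
  unfold z1; linarith

lemma z2_pos : 0 < z2 := by
  have : (1:ℝ) < Real.sqrt 2 := by
    rw [show (1:ℝ) = Real.sqrt 1 by simp]
    exact Real.sqrt_lt_sqrt (by norm_num) (by norm_num)
  unfold z2; linarith

lemma z12_pos : 0 < z12 := by
  have : (1:ℝ) < Real.sqrt 3 := by
    rw [show (1:ℝ) = Real.sqrt 1 by simp]
    exact Real.sqrt_lt_sqrt (by norm_num) (by norm_num)
  unfold z12; linarith

lemma z21_pos : 0 < z21 := by
  have := z12_pos; unfold z12 at this; unfold z21; linarith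

lemma prod_lt : z1 * z2 < z12 * z21 := by
  have h5 : Real.sqrt 5 < 2.23607 := by
    rw [show (2.23607:ℝ) = Real.sqrt (2.23607^2) by
      rw [Real.sqrt_sq (by norm_num)]]
    exact Real.sqrt_lt_sqrt (by norm_num) (by norm_num)
  have h2 : Real.sqrt 2 < 1.41422 := by
    rw [show (1.41422:ℝ) = Real.sqrt (1.41422^2) by
      rw [Real.sqrt_sq (by norm_num)]]
    exact Real.sqrt_lt_sqrt (by norm_num) (by norm_num)
  have h3 : Real.sqrt 3 < 1.73206 := by
    rw [show (1.73206:ℝ) = Real.sqrt (1.73206^2) by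
      rw [Real.sqrt_sq (by norm_num)]]
    exact Real.sqrt_lt_sqrt (by norm_num) (by norm_num)
  have h3' : (1.73205:ℝ) < Real.sqrt 3 := by
    rw [show (1.73205:ℝ) = Real.sqrt (1.73205^2) by
      rw [Real.sqrt_sq (by norm_num)]]
    exact Real.sqrt_lt_sqrt (by norm_num) (by norm_num)
  have hz1 := z1_pos
  have hz2 := z2_pos
  have hs3 : Real.sqrt 3 ^ 2 = 3 := Real.sq_sqrt (by norm_num)
  unfold z1 z2 z12 z21
  unfold z1 at hz1; unfold z2 at hz2
  nlinarith [mul_pos hz1 hz2, sq_nonneg (Real.sqrt 3 - 1.732055)]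

/-- **Key step in Lemma 4.4**: if both `|b log|T'(z₁)| + log p₁| < c` and
`|b log|T'(z₂)| + log p₂| < c` with `b ≥ 3/4`, then
`(1/2)|b log(|T'(z₁₂)| |T'(z₂₁)|) + log (p₁p₂)| ≥ 2c`. -/
theorem periodic_point_dichotomy
    (b : ℝ) (hb : 3 / 4 ≤ b)
    (p1 p2 : ℝ) (hp1 : p1 ∈ Set.Ioc (0 : ℝ) 1) (hp2 : p2 ∈ Set.Ioc (0 : ℝ) 1)
    (h1 : |b * logAbsDerivAt z1 + Real.log p1| < cConst)
    (h2 : |b * logAbsDerivAt z2 + Real.log p2| < cConst) :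
    2 * cConst ≤ (1 / 2) * |b * Real.log (z12⁻¹ ^ 2 * z21⁻¹ ^ 2) + Real.log (p1 * p2)| := by
  obtain ⟨hp1pos, -⟩ := hp1
  obtain ⟨hp2pos, -⟩ := hp2
  have hz1 := z1_pos; have hz2 := z2_pos; have hz12 := z12_pos; have hz21 := z21_pos
  have hA : (0:ℝ) < z1⁻¹ ^ 2 * z2⁻¹ ^ 2 := by positivity
  have hB : (0:ℝ) < z12⁻¹ ^ 2 * z21⁻¹ ^ 2 := by positivity
  have eA : z1⁻¹ ^ 2 * z2⁻¹ ^ 2 = ((z1 * z2) ^ 2)⁻¹ := by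
    rw [inv_pow, inv_pow, ← mul_inv, ← mul_pow]
  have eB : z12⁻¹ ^ 2 * z21⁻¹ ^ 2 = ((z12 * z21) ^ 2)⁻¹ := by
    rw [inv_pow, inv_pow, ← mul_inv, ← mul_pow]
  have hgt : z12⁻¹ ^ 2 * z21⁻¹ ^ 2 < z1⁻¹ ^ 2 * z2⁻¹ ^ 2 := by
    rw [eA, eB]
    exact inv_strictAnti₀ (by positivity)
      (by nlinarith [prod_lt, mul_pos hz1 hz2])
  set L := Real.log ((z1⁻¹ ^ 2 * z2⁻¹ ^ 2) / (z12⁻¹ ^ 2 * z21⁻¹ ^ 2)) with hLdef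
  have hLpos : 0 < L := Real.log_pos (by rw [lt_div_iff₀ hB]; linarith)
  have hc : cConst = L / 8 := by
    rw [cConst, ← hLdef, abs_of_pos hLpos]; ring
  have key : b * Real.log (z12⁻¹ ^ 2 * z21⁻¹ ^ 2) + Real.log (p1 * p2)
      = (b * logAbsDerivAt z1 + Real.log p1) + (b * logAbsDerivAt z2 + Real.log p2)
        - b * L := by
    rw [hLdef, logAbsDerivAt, logAbsDerivAt,
      Real.log_mul (ne_of_gt hp1pos) (ne_of_gt hp2pos),
      Real.log_div hA.ne' hB.ne',
      Real.log_mul (by positivity) (by positivity),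
      Real.log_mul (by positivity) (by positivity)]
    ring
  have hS1 := abs_lt.mp h1
  have hS2 := abs_lt.mp h2
  have hbL : (3/4) * L ≤ b * L := mul_le_mul_of_nonneg_right hb hLpos.le
  have hneg : b * Real.log (z12⁻¹ ^ 2 * z21⁻¹ ^ 2) + Real.log (p1 * p2) ≤ -(4 * cConst) := by
    rw [key]; rw [hc] at hS1 hS2 ⊢; linarith
  have habs : 4 * cConst ≤ |b * Real.log (z12⁻¹ ^ 2 * z21⁻¹ ^ 2) + Real.log (p1 * p2)| :=
    le_abs.mpr (Or.inr (by linarith))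
  linarith
end
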